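/- arXiv:2411.13116 — 4 statements merged into one kernel-verified Lean document; each statement's English description precedes it below -/
import Mathlib

section
/- Let T be a finite binary tree with a real-valued node labeling L and B-values defined by the recursion, and let Q be a real number. Suppose there exists a root-to-leaf path in T such that every node v on that path satisfies L(v) ≤ Q, and let w be the leaf reached by a min-B traverse path. Then L(w) ≤ Q. -/
/-!
`B(v)` is at most the largest label on any path from `v` down to a leaf, so a path with all
labels `≤ Q` forces `B(root) ≤ Q`. Along a min-`B` traverse path the `B`-values never increase,
since the chosen child has `B = min(B(l), B(r)) ≤ B(parent)`; at the leaf `w` the `B`-value is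
`L(w)`, hence `L(w) ≤ B(root) ≤ Q`.
-/

/-- A finite binary tree: every internal node has exactly two children, and
every node carries a label of type `α`. -/
inductive BTree (α : Type) : Type
  | leaf (a : α) : BTree α
  | node (a : α) (l r : BTree α) : BTree α

namespace BTree

variable {α : Type}

/-- The `B`-values defined by the recursion `B(v) = L(v)` at a leaf and
`B(v) = max(L(v), min(B(left child), B(right child)))` at an internal node. -/
noncomputable def Bval (L : α → ℝ) : BTree α → ℝ
  | leaf a => L a
  | node a l r => max (L a) (min (Bval L l) (Bval L r))

/-- There exists a root-to-leaf path all of whose nodes satisfy `p`. -/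
def ExistsPath (p : α → Prop) : BTree α → Prop
  | leaf a => p a
  | node a l r => p a ∧ (ExistsPath p l ∨ ExistsPath p r)

/-- `MinBLeaf L t w` : `w` is (the label of) a leaf reached by a min-`B`
traverse path, i.e. a root-to-leaf path which, at every internal node,
continues to a child whose `B`-value is at most that of the other child. -/
def MinBLeaf (L : α → ℝ) : BTree α → α → Prop
  | leaf a, w => w = a
  | node _ l r, w =>
      (Bval L l ≤ Bval L r ∧ MinBLeaf L l w) ∨ (Bval L r ≤ Bval L l ∧ MinBLeaf L r w)

end BTree

namespace BTree

variable {α : Type} (L : α → ℝ)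

theorem Bval_le_of_existsPath {Q : ℝ} :
    ∀ {t : BTree α}, t.ExistsPath (fun a => L a ≤ Q) → t.Bval L ≤ Q
  | leaf _, h => h
  | node _ l r, ⟨ha, hlr⟩ => by
    refine max_le ha ?_
    rcases hlr with hl | hr
    · exact (min_le_left _ _).trans (Bval_le_of_existsPath hl)
    · exact (min_le_right _ _).trans (Bval_le_of_existsPath hr)

theorem le_Bval_of_minBLeaf {w : α} : ∀ {t : BTree α}, MinBLeaf L t w → L w ≤ t.Bval L
  | leaf _, h => h ▸ le_rfl
  | node _ _ _, Or.inl ⟨hle, hl⟩ =>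
    le_max_of_le_right <| (min_eq_left hle).symm ▸ le_Bval_of_minBLeaf hl
  | node _ _ _, Or.inr ⟨hle, hr⟩ =>
    le_max_of_le_right <| (min_eq_right hle).symm ▸ le_Bval_of_minBLeaf hr

end BTree

/-- Let `T` be a finite binary tree with a real-valued node labeling `L` and
`B`-values defined by the recursion, and let `Q` be a real number.  Suppose
there exists a root-to-leaf path in `T` such that every node `v` on that path
satisfies `L(v) ≤ Q`, and let `w` be the leaf reached by a min-`B` traverse
path.  Then `L(w) ≤ Q`. -/
theorem stmt_7 {α : Type} (L : α → ℝ) (Q : ℝ) (t : BTree α)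
    (hpath : t.ExistsPath (fun a => L a ≤ Q))
    (w : α) (hw : BTree.MinBLeaf L t w) :
    L w ≤ Q :=
  (BTree.le_Bval_of_minBLeaf L hw).trans (BTree.Bval_le_of_existsPath L hpath)
end

section
/- Let H and h be positive integers with h ≤ H, let ν₁ > 0, ρ ∈ (0,1), let M be a positive integer, δ₁ ∈ (0,1), and set c = ((H−h+1)²/ν₁²)·ln(6MH/δ₁). If K is a real number and D_m ≥ 1 is an integer such that K ≥ Σ_{D=1}^{D_m−1} (2ρ⁻²)^D · (c/2), then 2^{D_m + 1} − 1 ≤ 4·( K·(2−ρ²)/c + 1 )^{log_{2ρ⁻²} 2}. -/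
/-! With `b = 2/ρ²`, the geometric sum gives `Σ_{D=1}^{n} b^D · c/2 = (b^n - 1) · c/(2 - ρ²)`,
so the hypothesis on `K` says `b^(D_m - 1) ≤ K(2 - ρ²)/c + 1`. Raising both sides to the power
`log_b 2` turns `b^(D_m - 1)` into `2^(D_m - 1)`, and `2^(D_m + 1) ≤ 4 · 2^(D_m - 1)`. -/

open Finset Real

lemma mul_sub_one_sum_Icc_one_pow {R : Type*} [CommRing R] (b : R) (n : ℕ) :
    (b - 1) * ∑ i ∈ Icc 1 n, b ^ i = b * (b ^ n - 1) := by
  rw [← Ico_add_one_right_eq_Icc, mul_comm, geom_sum_Ico_mul b (Nat.le_add_left 1 n)]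
  ring

lemma sum_Icc_one_two_div_sq_pow_mul_half {ρ : ℝ} (hρ : ρ ≠ 0) (hρ2 : ρ ^ 2 ≠ 2) (c : ℝ)
    (n : ℕ) :
    ∑ D ∈ Icc 1 n, (2 / ρ ^ 2) ^ D * (c / 2) = ((2 / ρ ^ 2) ^ n - 1) * c / (2 - ρ ^ 2) := by
  have hgeom := mul_sub_one_sum_Icc_one_pow (2 / ρ ^ 2) n
  have hsum : (2 - ρ ^ 2) * ∑ i ∈ Icc 1 n, (2 / ρ ^ 2) ^ i = 2 * ((2 / ρ ^ 2) ^ n - 1) := by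
    rw [show 2 - ρ ^ 2 = ρ ^ 2 * (2 / ρ ^ 2 - 1) by field_simp, mul_assoc, hgeom]
    field_simp
  rw [← sum_mul, eq_div_iff (sub_ne_zero.mpr (Ne.symm hρ2))]
  linear_combination (c / 2) * hsum

lemma pow_le_rpow_logb_of_pow_le {a b X : ℝ} (hb : 1 < b) (ha : 1 ≤ a) {n : ℕ}
    (h : b ^ n ≤ X) : a ^ n ≤ X ^ logb b a := by
  have hb0 : 0 < b := zero_lt_one.trans hb
  calc a ^ n = (b ^ n) ^ logb b a := by
        rw [← rpow_pow_comm hb0.le, rpow_logb hb0 hb.ne' (zero_lt_one.trans_le ha)]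
    _ ≤ X ^ logb b a := rpow_le_rpow (by positivity) h (logb_nonneg hb ha)

lemma confidence_width_pos {H h M : ℕ} (hh : 1 ≤ h) (hhH : h ≤ H) (hM : 1 ≤ M)
    {ν₁ δ₁ : ℝ} (hν : 0 < ν₁) (hδ0 : 0 < δ₁) (hδ1 : δ₁ < 1) :
    0 < (((H : ℝ) - (h : ℝ) + 1) ^ 2 / ν₁ ^ 2) * Real.log (6 * M * H / δ₁) := by
  have hhH' : (h : ℝ) ≤ H := by exact_mod_cast hhH
  have hH : (1 : ℝ) ≤ H := by exact_mod_cast hh.trans hhH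
  have hM' : (1 : ℝ) ≤ M := by exact_mod_cast hM
  refine mul_pos (div_pos (by nlinarith) (by positivity)) (Real.log_pos ?_)
  rw [one_lt_div hδ0]
  nlinarith

theorem stmt_9_general (H h : ℕ) (hh : 1 ≤ h) (hhH : h ≤ H)
    (ν₁ : ℝ) (hν : 0 < ν₁) (ρ : ℝ) (hρ0 : 0 < ρ) (hρ1 : ρ < 1)
    (M : ℕ) (hM : 1 ≤ M) (δ₁ : ℝ) (hδ0 : 0 < δ₁) (hδ1 : δ₁ < 1)
    (c : ℝ) (hc : c = (((H : ℝ) - (h : ℝ) + 1) ^ 2 / ν₁ ^ 2) * Real.log (6 * M * H / δ₁))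
    (K : ℝ) (Dm : ℕ)
    (hK : K ≥ ∑ D ∈ Finset.Icc 1 (Dm - 1), (2 / ρ ^ 2) ^ D * (c / 2)) :
    (2 : ℝ) ^ (Dm + 1) - 1 ≤
      4 * (K * (2 - ρ ^ 2) / c + 1) ^ (Real.logb (2 / ρ ^ 2) 2) := by
  have hc0 : 0 < c := hc ▸ confidence_width_pos hh hhH hM hν hδ0 hδ1
  have hρ2_pos : 0 < ρ ^ 2 := by positivity
  have hρ21 : ρ ^ 2 < 1 := by nlinarith
  have hb : 1 < 2 / ρ ^ 2 := by rw [one_lt_div hρ2_pos]; linarith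
  rw [sum_Icc_one_two_div_sq_pow_mul_half hρ0.ne' (by linarith) c] at hK
  have hdepth : (2 / ρ ^ 2) ^ (Dm - 1) ≤ K * (2 - ρ ^ 2) / c + 1 := by
    rw [← sub_le_iff_le_add, le_div_iff₀ hc0]
    rw [ge_iff_le, div_le_iff₀ (by linarith)] at hK
    linarith
  have hcount : (2 : ℝ) ^ (Dm + 1) ≤ 4 * 2 ^ (Dm - 1) := by
    rw [show (4 : ℝ) * 2 ^ (Dm - 1) = 2 ^ (Dm - 1 + 2) by ring]
    exact pow_le_pow_right₀ one_le_two (by omega)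
  linarith [pow_le_rpow_logb_of_pow_le hb one_le_two hdepth]

/-- Let `H` and `h` be positive integers with `h ≤ H`, let `ν₁ > 0`,
`ρ ∈ (0,1)`, let `M` be a positive integer, `δ₁ ∈ (0,1)`, and set
`c = ((H−h+1)²/ν₁²)·ln(6MH/δ₁)`.  If `K` is a real number and `D_m ≥ 1` is an
integer such that `K ≥ Σ_{D=1}^{D_m−1} (2ρ⁻²)^D · (c/2)`, then
`2^{D_m + 1} − 1 ≤ 4·( K·(2−ρ²)/c + 1 )^{log_{2ρ⁻²} 2}`. -/
theorem stmt_9 (H h : ℕ) (hh : 1 ≤ h) (hhH : h ≤ H)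
    (ν₁ : ℝ) (hν : 0 < ν₁) (ρ : ℝ) (hρ0 : 0 < ρ) (hρ1 : ρ < 1)
    (M : ℕ) (hM : 1 ≤ M) (δ₁ : ℝ) (hδ0 : 0 < δ₁) (hδ1 : δ₁ < 1)
    (c : ℝ) (hc : c = (((H : ℝ) - (h : ℝ) + 1) ^ 2 / ν₁ ^ 2) * Real.log (6 * M * H / δ₁))
    (K : ℝ) (Dm : ℕ) (hDm : 1 ≤ Dm)
    (hK : K ≥ ∑ D ∈ Finset.Icc 1 (Dm - 1), (2 / ρ ^ 2) ^ D * (c / 2)) :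
    (2 : ℝ) ^ (Dm + 1) - 1 ≤
      4 * (K * (2 - ρ ^ 2) / c + 1) ^ (Real.logb (2 / ρ ^ 2) 2) :=
  stmt_9_general H h hh hhH ν₁ hν ρ hρ0 hρ1 M hM δ₁ hδ0 hδ1 c hc K Dm hK
end

section
/- Let ρ ∈ (0,1) and c > 0 be real numbers, and let K be a real number and h_m ≥ 1 an integer such that K ≥ (c/2)·Σ_{D=1}^{h_m−1} ρ^{−2D}. Then h_m ≤ log_{ρ⁻²}( 2K(1−ρ²)/c + 1 ) + 1. -/
/-!
Multiplying the geometric sum `∑_{D=1}^{n} b^D` by `1 - b⁻¹` telescopes it to `b^n - 1`, so the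
hypothesis on `K` reads `b^n ≤ 2K(1 - b⁻¹)/c + 1` with `b = ρ⁻² > 1`; taking `log_b` bounds
`n = h_m - 1`.
-/

open Finset Real

theorem one_sub_inv_mul_sum_Icc_pow {K : Type*} [Field K] {r : K} (hr : r ≠ 0) (n : ℕ) :
    (1 - r⁻¹) * ∑ D ∈ Icc 1 n, r ^ D = r ^ n - 1 := by
  have hsum : (∑ D ∈ Icc 1 n, r ^ D) * (r - 1) = r ^ (n + 1) - r ^ 1 := by
    rw [← Finset.Ico_add_one_right_eq_Icc, geom_sum_Ico_mul r (by omega)]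
  calc (1 - r⁻¹) * ∑ D ∈ Icc 1 n, r ^ D = r⁻¹ * ((∑ D ∈ Icc 1 n, r ^ D) * (r - 1)) := by
        field_simp
    _ = r ^ n - 1 := by
        rw [hsum]
        field_simp
        ring

theorem natCast_le_logb_of_mul_sum_Icc_pow_le {b c K : ℝ} (hb : 1 < b) (hc : 0 < c) {n : ℕ}
    (hK : c / 2 * ∑ D ∈ Icc 1 n, b ^ D ≤ K) :
    (n : ℝ) ≤ logb b (2 * K * (1 - b⁻¹) / c + 1) := by
  have hb_inv : 0 ≤ 1 - b⁻¹ := sub_nonneg.mpr (inv_le_one_of_one_le₀ hb.le)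
  have hsum : ∑ D ∈ Icc 1 n, b ^ D ≤ 2 * K / c := by
    rw [le_div_iff₀ hc]
    linarith
  have hpow : b ^ n ≤ 2 * K * (1 - b⁻¹) / c + 1 :=
    calc b ^ n = (1 - b⁻¹) * ∑ D ∈ Icc 1 n, b ^ D + 1 := by
          rw [one_sub_inv_mul_sum_Icc_pow (by positivity)]
          ring
      _ ≤ (1 - b⁻¹) * (2 * K / c) + 1 := by gcongr
      _ = 2 * K * (1 - b⁻¹) / c + 1 := by ring
  rw [le_logb_iff_rpow_le hb ((pow_pos (by linarith) n).trans_le hpow), rpow_natCast]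
  exact hpow

theorem stmt_10_general (ρ : ℝ) (hρ0 : 0 < ρ) (hρ1 : ρ < 1) (c : ℝ) (hc : 0 < c)
    (K : ℝ) (hm : ℕ)
    (hK : K ≥ (c / 2) * ∑ D ∈ Finset.Icc 1 (hm - 1), (1 / ρ ^ 2) ^ D) :
    (hm : ℝ) ≤ Real.logb (1 / ρ ^ 2) (2 * K * (1 - ρ ^ 2) / c + 1) + 1 := by
  have hbase : 1 < 1 / ρ ^ 2 := by
    rw [lt_div_iff₀ (by positivity), one_mul]
    nlinarith
  have hlog := natCast_le_logb_of_mul_sum_Icc_pow_le hbase hc hK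
  rw [one_div, inv_inv, ← one_div] at hlog
  have hcast : (hm : ℝ) ≤ ((hm - 1 : ℕ) : ℝ) + 1 := by
    exact_mod_cast (by omega : hm ≤ hm - 1 + 1)
  linarith

/-- Let `ρ ∈ (0,1)` and `c > 0` be real numbers, and let `K` be a real number
and `h_m ≥ 1` an integer such that `K ≥ (c/2)·Σ_{D=1}^{h_m−1} ρ^{−2D}`.  Then
`h_m ≤ log_{ρ⁻²}( 2K(1−ρ²)/c + 1 ) + 1`. -/
theorem stmt_10 (ρ : ℝ) (hρ0 : 0 < ρ) (hρ1 : ρ < 1) (c : ℝ) (hc : 0 < c)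
    (K : ℝ) (hm : ℕ) (hhm : 1 ≤ hm)
    (hK : K ≥ (c / 2) * ∑ D ∈ Finset.Icc 1 (hm - 1), (1 / ρ ^ 2) ^ D) :
    (hm : ℝ) ≤ Real.logb (1 / ρ ^ 2) (2 * K * (1 - ρ ^ 2) / c + 1) + 1 :=
  stmt_10_general ρ hρ0 hρ1 c hc K hm hK
end

section
/- Let (Ω, F, P) be a probability space equipped with a filtration (F_k)_{k=0}^{K}, and let Z_1, …, Z_K be random variables such that each Z_k is F_k-measurable and satisfies 0 ≤ Z_k ≤ B almost surely, for a constant B ≥ 1. Let δ ∈ (0,1) and let R be a constant with R ≥ (4/9)·ln(1/δ) such that Σ_{k=1}^{K} E[Z_k | F_{k−1}] ≤ R almost surely. Then P( Σ_{k=1}^{K} Z_k > R + 2B·√(R·ln(1/δ)) ) ≤ δ. -/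
/-!
For `t ≥ 0` put `c = (e^{tB} - 1) / B`. By convexity `e^{tz} ≤ 1 + cz` on `[0, B]`, hence
`E[e^{t Z_k} | F_{k-1}] ≤ exp (c E[Z_k | F_{k-1}])`, so
`exp (∑_{k ≤ n} (t Z_k - c E[Z_k | F_{k-1}]))` is a supermartingale of mean at most `1`.
As `∑ E[Z_k | F_{k-1}] ≤ R`, Chernoff's bound gives `P(∑ Z_k ≥ s) ≤ exp (cR - ts)`.
Taking `tB = √(ln(1/δ) / R)`, which is at most `3/2` because `R ≥ (4/9) ln(1/δ)`, the
estimate `e^x ≤ 1 + x + x²` on `[0, 3/2]` makes the exponent at most `-ln(1/δ)` at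
`s = R + 2B √(R ln(1/δ))`.
-/

open MeasureTheory ProbabilityTheory Real Finset

lemma exp_le_one_add_add_sq {x : ℝ} (h0 : 0 ≤ x) (h1 : x ≤ 3 / 2) : exp x ≤ 1 + x + x ^ 2 := by
  -- the cubic Taylor bound needs an argument at most `1`, so apply it at `x / 2` and square
  have half : exp (x / 2) ≤ 1 + x / 2 + x ^ 2 / 8 + x ^ 3 / 36 := by
    refine (exp_bound' (by linarith) (by linarith) (n := 3) (by norm_num)).trans_eq ?_
    simp only [sum_range_succ, sum_range_zero, Nat.factorial]
    push_cast
    ring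
  calc exp x = exp (x / 2) ^ 2 := by rw [← exp_nat_mul]; ring_nf
    _ ≤ (1 + x / 2 + x ^ 2 / 8 + x ^ 3 / 36) ^ 2 := by gcongr
    _ ≤ 1 + x + x ^ 2 := by
      nlinarith [pow_nonneg h0 4, pow_nonneg h0 5, pow_nonneg h0 6,
        mul_nonneg (pow_nonneg h0 3) (sub_nonneg.2 h1),
        mul_nonneg (pow_nonneg h0 4) (sub_nonneg.2 h1),
        mul_nonneg (pow_nonneg h0 5) (sub_nonneg.2 h1)]

lemma exp_mul_le_one_add_mul {B t z : ℝ} (hB : 0 < B) (hz0 : 0 ≤ z) (hzB : z ≤ B) :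
    exp (t * z) ≤ 1 + (exp (t * B) - 1) / B * z := by
  have h := convexOn_exp.2 (Set.mem_univ 0) (Set.mem_univ (t * B))
    (sub_nonneg.2 (div_le_one_of_le₀ hzB hB.le)) (div_nonneg hz0 hB.le) (sub_add_cancel 1 (z / B))
  simp only [smul_eq_mul, mul_zero, zero_add, exp_zero, mul_one] at h
  calc exp (t * z) = exp (z / B * (t * B)) := by field_simp
    _ ≤ 1 - z / B + z / B * exp (t * B) := h
    _ = 1 + (exp (t * B) - 1) / B * z := by ring

lemma exp_mul_sub_one_div_nonneg {B t : ℝ} (hB : 0 < B) (ht : 0 ≤ t) :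
    0 ≤ (exp (t * B) - 1) / B :=
  div_nonneg (sub_nonneg.2 (one_le_exp (mul_nonneg ht hB.le))) hB.le

section CondExp

variable {Ω : Type*} {m m0 : MeasurableSpace Ω} {μ : Measure Ω} [IsFiniteMeasure μ]

lemma condExp_exp_mul_le (hm : m ≤ m0) {Z : Ω → ℝ} (hZ : AEStronglyMeasurable Z μ) {B : ℝ}
    (hB : 0 < B) (hZB : ∀ᵐ ω ∂μ, 0 ≤ Z ω ∧ Z ω ≤ B) (t : ℝ) :
    μ[fun ω => exp (t * Z ω)|m] ≤ᵐ[μ] fun ω => exp ((exp (t * B) - 1) / B * μ[Z|m] ω) := by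
  set c := (exp (t * B) - 1) / B
  have hZ_int : Integrable Z μ := Integrable.of_bound hZ B <| by
    filter_upwards [hZB] with ω hω
    rw [norm_of_nonneg hω.1]
    exact hω.2
  have hchord : ∀ᵐ ω ∂μ, exp (t * Z ω) ≤ ((fun _ => 1) + c • Z : Ω → ℝ) ω := by
    filter_upwards [hZB] with ω hω using exp_mul_le_one_add_mul hB hω.1 hω.2
  have hlin_int : Integrable ((fun _ => 1) + c • Z) μ := (integrable_const 1).add (hZ_int.smul c)
  have hexp_int : Integrable (fun ω => exp (t * Z ω)) μ := by
    refine hlin_int.mono' (by fun_prop) ?_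
    filter_upwards [hchord] with ω hω
    rwa [norm_of_nonneg (exp_pos _).le]
  have hlin : μ[(fun _ => 1) + c • Z|m] =ᵐ[μ] (fun _ => 1) + c • μ[Z|m] := by
    filter_upwards [condExp_add (integrable_const (1 : ℝ)) (hZ_int.smul c) m,
      condExp_smul c Z m] with ω h_add h_smul
    rw [h_add, Pi.add_apply, Pi.add_apply, h_smul, condExp_const hm]
  filter_upwards [condExp_mono hexp_int hlin_int hchord, hlin] with ω hmono hω
  rw [hω, Pi.add_apply, Pi.smul_apply, smul_eq_mul] at hmono
  linarith [add_one_le_exp (c * μ[Z|m] ω)]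

lemma integral_mul_le_of_condExp_le (hm : m ≤ m0) {X Y G : Ω → ℝ} (hX : StronglyMeasurable[m] X)
    (hX0 : 0 ≤ᵐ[μ] X) (hY : Integrable Y μ) (hXY : Integrable (X * Y) μ)
    (hXG : Integrable (X * G) μ) (hYG : μ[Y|m] ≤ᵐ[μ] G) :
    ∫ ω, X ω * Y ω ∂μ ≤ ∫ ω, X ω * G ω ∂μ := by
  have hpull := condExp_mul_of_stronglyMeasurable_left hX hXY hY
  calc ∫ ω, X ω * Y ω ∂μ = ∫ ω, μ[X * Y|m] ω ∂μ := (integral_condExp hm).symm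
    _ = ∫ ω, X ω * μ[Y|m] ω ∂μ := integral_congr_ae hpull
    _ ≤ ∫ ω, X ω * G ω ∂μ := by
      refine integral_mono_ae (integrable_condExp.congr hpull) hXG ?_
      filter_upwards [hX0, hYG] with ω hXω hYω using mul_le_mul_of_nonneg_left hYω hXω

lemma integrable_mul_exp_and_integral_le (hm : m ≤ m0) {X Z : Ω → ℝ} (hX : StronglyMeasurable[m] X)
    (hX0 : ∀ ω, 0 ≤ X ω) (hX_int : Integrable X μ) (hZ : AEStronglyMeasurable Z μ) {B t : ℝ}
    (hB : 0 < B) (ht : 0 ≤ t) (hZB : ∀ᵐ ω ∂μ, 0 ≤ Z ω ∧ Z ω ≤ B) :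
    Integrable (fun ω => X ω * exp (t * Z ω - (exp (t * B) - 1) / B * μ[Z|m] ω)) μ ∧
      ∫ ω, X ω * exp (t * Z ω - (exp (t * B) - 1) / B * μ[Z|m] ω) ∂μ ≤ ∫ ω, X ω ∂μ := by
  set c := (exp (t * B) - 1) / B
  have hc : 0 ≤ c := exp_mul_sub_one_div_nonneg hB ht
  have hμ0 : 0 ≤ᵐ[μ] μ[Z|m] := condExp_nonneg (by filter_upwards [hZB] with ω hω using hω.1)
  have hexp_int : Integrable (fun ω => exp (t * Z ω)) μ := by
    refine Integrable.of_bound (by fun_prop) (exp (t * B)) ?_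
    filter_upwards [hZB] with ω hω
    rw [norm_of_nonneg (exp_pos _).le]
    exact exp_le_exp.2 (mul_le_mul_of_nonneg_left hω.2 ht)
  have hprod_int : Integrable (fun ω => X ω * exp (t * Z ω - c * μ[Z|m] ω)) μ := by
    refine hX_int.mul_bdd (by fun_prop) (c := exp (t * B)) ?_
    filter_upwards [hZB, hμ0] with ω hZω hμω
    rw [norm_of_nonneg (exp_pos _).le, exp_le_exp]
    nlinarith [mul_nonneg hc hμω, mul_le_mul_of_nonneg_left hZω.2 ht]
  set W : Ω → ℝ := fun ω => X ω * exp (-(c * μ[Z|m] ω))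
  have hW : StronglyMeasurable[m] W :=
    hX.mul (continuous_exp.comp_stronglyMeasurable (stronglyMeasurable_condExp.const_mul c).neg)
  have hWY : W * (fun ω => exp (t * Z ω)) = fun ω => X ω * exp (t * Z ω - c * μ[Z|m] ω) := by
    funext ω
    rw [Pi.mul_apply, mul_assoc, ← exp_add, neg_add_eq_sub]
  have hWG : W * (fun ω => exp (c * μ[Z|m] ω)) = X := by
    funext ω
    rw [Pi.mul_apply, mul_assoc, ← exp_add, neg_add_cancel, exp_zero, mul_one]
  refine ⟨hprod_int, ?_⟩
  have key := integral_mul_le_of_condExp_le hm hW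
    (Filter.Eventually.of_forall fun ω => mul_nonneg (hX0 ω) (exp_pos _).le) hexp_int
    (hWY ▸ hprod_int) (hWG ▸ hX_int) (condExp_exp_mul_le hm hZ hB hZB t)
  rwa [← hWY, ← hWG]

end CondExp

section CompensatedExp

variable {Ω : Type*} {m0 : MeasurableSpace Ω} {P : Measure Ω} {F : Filtration ℕ m0} {Z : ℕ → Ω → ℝ}

noncomputable def compensatedExp (P : Measure Ω) (F : Filtration ℕ m0) (Z : ℕ → Ω → ℝ) (t c : ℝ)
    (n : ℕ) (ω : Ω) : ℝ :=
  exp (∑ k ∈ Icc 1 n, (t * Z k ω - c * P[Z k|F (k - 1)] ω))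

lemma compensatedExp_succ (t c : ℝ) (n : ℕ) (ω : Ω) :
    compensatedExp P F Z t c (n + 1) ω =
      compensatedExp P F Z t c n ω * exp (t * Z (n + 1) ω - c * P[Z (n + 1)|F n] ω) := by
  rw [compensatedExp, sum_Icc_succ_top (by omega), exp_add]
  rfl

lemma stronglyMeasurable_compensatedExp {n : ℕ}
    (hmeas : ∀ k, 1 ≤ k → k ≤ n → StronglyMeasurable[F k] (Z k)) (t c : ℝ) :
    StronglyMeasurable[F n] (compensatedExp P F Z t c n) := by
  refine continuous_exp.comp_stronglyMeasurable (Finset.stronglyMeasurable_fun_sum _ fun k hk => ?_)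
  obtain ⟨hk1, hkn⟩ := Finset.mem_Icc.1 hk
  exact (((hmeas k hk1 hkn).mono (F.mono hkn)).const_mul t).sub
    ((stronglyMeasurable_condExp.mono (F.mono (by omega))).const_mul c)

lemma integrable_compensatedExp_and_integral_le_one [IsProbabilityMeasure P] {B t : ℝ} (hB : 0 < B)
    (ht : 0 ≤ t) (n : ℕ)
    (hmeas : ∀ k, 1 ≤ k → k ≤ n → StronglyMeasurable[F k] (Z k))
    (hbound : ∀ k, 1 ≤ k → k ≤ n → ∀ᵐ ω ∂P, 0 ≤ Z k ω ∧ Z k ω ≤ B) :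
    Integrable (compensatedExp P F Z t ((exp (t * B) - 1) / B) n) P ∧
      ∫ ω, compensatedExp P F Z t ((exp (t * B) - 1) / B) n ω ∂P ≤ 1 := by
  set c := (exp (t * B) - 1) / B
  induction n with
  | zero =>
    have hA0 : compensatedExp P F Z t c 0 = fun _ => 1 := by
      funext ω
      simp [compensatedExp]
    simp [hA0]
  | succ n ih =>
    obtain ⟨hA_int, hA_le⟩ := ih (fun k hk1 hkn => hmeas k hk1 (by omega))
      (fun k hk1 hkn => hbound k hk1 (by omega))
    obtain ⟨hstep_int, hstep_le⟩ := integrable_mul_exp_and_integral_le (F.le n)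
      (stronglyMeasurable_compensatedExp (fun k hk1 hkn => hmeas k hk1 (by omega)) t c)
      (fun ω => (exp_pos _).le) hA_int
      ((hmeas (n + 1) (by omega) le_rfl).mono (F.le _)).aestronglyMeasurable hB ht
      (hbound (n + 1) (by omega) le_rfl)
    rw [funext (compensatedExp_succ t c n)]
    exact ⟨hstep_int, hstep_le.trans hA_le⟩

end CompensatedExp

lemma measure_sum_ge_le_exp {Ω : Type*} {m0 : MeasurableSpace Ω} {P : Measure Ω}
    [IsProbabilityMeasure P] {F : Filtration ℕ m0} {Z : ℕ → Ω → ℝ} {K : ℕ} {B t R : ℝ}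
    (hB : 0 < B) (ht : 0 ≤ t)
    (hmeas : ∀ k, 1 ≤ k → k ≤ K → StronglyMeasurable[F k] (Z k))
    (hbound : ∀ k, 1 ≤ k → k ≤ K → ∀ᵐ ω ∂P, 0 ≤ Z k ω ∧ Z k ω ≤ B)
    (hcond : ∀ᵐ ω ∂P, ∑ k ∈ Icc 1 K, (P[Z k|F (k - 1)]) ω ≤ R) (s : ℝ) :
    P.real {ω | s ≤ ∑ k ∈ Icc 1 K, Z k ω} ≤ exp ((exp (t * B) - 1) / B * R - t * s) := by
  set c := (exp (t * B) - 1) / B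
  set A := compensatedExp P F Z t c K
  obtain ⟨hA_int, hA_le⟩ := integrable_compensatedExp_and_integral_le_one hB ht K hmeas hbound
  have hsplit : ∀ ω, exp (t * ∑ k ∈ Icc 1 K, Z k ω) =
      A ω * exp (c * ∑ k ∈ Icc 1 K, (P[Z k|F (k - 1)]) ω) := by
    intro ω
    simp only [A, compensatedExp, ← exp_add, sum_sub_distrib, ← mul_sum, sub_add_cancel]
  have hdom : ∀ᵐ ω ∂P, exp (t * ∑ k ∈ Icc 1 K, Z k ω) ≤ A ω * exp (c * R) := by
    have hc : 0 ≤ c := exp_mul_sub_one_div_nonneg hB ht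
    filter_upwards [hcond] with ω hω
    rw [hsplit]
    exact mul_le_mul_of_nonneg_left (exp_le_exp.2 (mul_le_mul_of_nonneg_left hω hc))
      (exp_pos _).le
  have hexp_int : Integrable (fun ω => exp (t * ∑ k ∈ Icc 1 K, Z k ω)) P := by
    refine (hA_int.mul_const (exp (c * R))).mono' ?_ ?_
    · refine (continuous_exp.comp_stronglyMeasurable (StronglyMeasurable.const_mul
        (Finset.stronglyMeasurable_fun_sum _ fun k hk => ?_) t)).aestronglyMeasurable
      obtain ⟨hk1, hkK⟩ := Finset.mem_Icc.1 hk
      exact (hmeas k hk1 hkK).mono (F.le k)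
    · filter_upwards [hdom] with ω hω
      rwa [norm_of_nonneg (exp_pos _).le]
  have hmgf : mgf (fun ω => ∑ k ∈ Icc 1 K, Z k ω) P t ≤ exp (c * R) :=
    calc ∫ ω, exp (t * ∑ k ∈ Icc 1 K, Z k ω) ∂P ≤ ∫ ω, A ω * exp (c * R) ∂P :=
          integral_mono_ae hexp_int (hA_int.mul_const _) hdom
      _ = (∫ ω, A ω ∂P) * exp (c * R) := integral_mul_const _ _
      _ ≤ exp (c * R) := mul_le_of_le_one_left (exp_pos _).le hA_le
  calc P.real {ω | s ≤ ∑ k ∈ Icc 1 K, Z k ω}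
      ≤ exp (-t * s) * mgf (fun ω => ∑ k ∈ Icc 1 K, Z k ω) P t :=
        measure_ge_le_exp_mul_mgf s ht hexp_int
    _ ≤ exp (-t * s) * exp (c * R) := mul_le_mul_of_nonneg_left hmgf (exp_pos _).le
    _ = exp (c * R - t * s) := by rw [← exp_add]; ring_nf

lemma chernoff_exponent_le_neg {B R L : ℝ} (hB : 1 ≤ B) (hL : 0 ≤ L) (hR : 0 < R)
    (hLR : 4 / 9 * L ≤ R) :
    (exp (√(L / R) / B * B) - 1) / B * R - √(L / R) / B * (R + 2 * B * √(R * L)) ≤ -L := by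
  have hB0 : 0 < B := by linarith
  set x := √(L / R)
  have hx0 : 0 ≤ x := sqrt_nonneg _
  have hx_sq : x ^ 2 = L / R := sq_sqrt (div_nonneg hL hR.le)
  have hx_le : x ≤ 3 / 2 := by
    refine abs_le_of_sq_le_sq' ?_ (by norm_num) |>.2
    rw [hx_sq, div_le_iff₀ hR]
    linarith
  have hx_mul : x * √(R * L) = L := by
    rw [← sqrt_mul (div_nonneg hL hR.le), show L / R * (R * L) = L ^ 2 by field_simp,
      sqrt_sq hL]
  have hexp : exp x - 1 ≤ x + x ^ 2 := by linarith [exp_le_one_add_add_sq hx0 hx_le]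
  have hLB : L / B ≤ L := div_le_self hL hB
  calc (exp (x / B * B) - 1) / B * R - x / B * (R + 2 * B * √(R * L))
      = (exp x - 1) * R / B - x * R / B - 2 * (x * √(R * L)) := by
        rw [div_mul_cancel₀ x hB0.ne']
        field_simp
        ring
    _ ≤ (x + x ^ 2) * R / B - x * R / B - 2 * L := by
        rw [hx_mul]
        gcongr
    _ = L / B - 2 * L := by
        rw [hx_sq]
        field_simp
        ring
    _ ≤ -L := by linarith

/-- Let `(Ω, F, P)` be a probability space equipped with a filtration
`(F_k)_{k=0}^{K}`, and let `Z_1, …, Z_K` be random variables such that each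
`Z_k` is `F_k`-measurable and satisfies `0 ≤ Z_k ≤ B` almost surely, for a
constant `B ≥ 1`.  Let `δ ∈ (0,1)` and let `R` be a constant with
`R ≥ (4/9)·ln(1/δ)` such that `Σ_{k=1}^{K} E[Z_k | F_{k−1}] ≤ R` almost
surely.  Then `P( Σ_{k=1}^{K} Z_k > R + 2B·√(R·ln(1/δ)) ) ≤ δ`. -/
theorem stmt_12 {Ω : Type*} {m0 : MeasurableSpace Ω} (P : Measure Ω)
    [IsProbabilityMeasure P] (K : ℕ) (F : Filtration ℕ m0)
    (Z : ℕ → Ω → ℝ) (B : ℝ) (hB : 1 ≤ B)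
    (hmeas : ∀ k, 1 ≤ k → k ≤ K → StronglyMeasurable[F k] (Z k))
    (hbound : ∀ k, 1 ≤ k → k ≤ K → ∀ᵐ ω ∂P, 0 ≤ Z k ω ∧ Z k ω ≤ B)
    (δ : ℝ) (hδ0 : 0 < δ) (hδ1 : δ < 1)
    (R : ℝ) (hR : (4 / 9) * Real.log (1 / δ) ≤ R)
    (hcond : ∀ᵐ ω ∂P, ∑ k ∈ Finset.Icc 1 K, (P[Z k|F (k - 1)]) ω ≤ R) :
    P {ω | R + 2 * B * Real.sqrt (R * Real.log (1 / δ)) <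
        ∑ k ∈ Finset.Icc 1 K, Z k ω} ≤ ENNReal.ofReal δ := by
  set L := log (1 / δ) with hL_def
  have hL : 0 < L := log_pos (one_lt_one_div hδ0 hδ1)
  have hR0 : 0 < R := by linarith
  set s := R + 2 * B * √(R * L)
  have htail := measure_sum_ge_le_exp (t := √(L / R) / B) (by linarith)
    (div_nonneg (sqrt_nonneg _) (by linarith)) hmeas hbound hcond s
  rw [ENNReal.le_ofReal_iff_toReal_le (measure_ne_top _ _) hδ0.le]
  calc P.real {ω | s < ∑ k ∈ Icc 1 K, Z k ω} ≤ P.real {ω | s ≤ ∑ k ∈ Icc 1 K, Z k ω} :=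
        measureReal_mono fun ω (hω : s < _) => hω.le
    _ ≤ exp (-L) := htail.trans (exp_le_exp.2 (chernoff_exponent_le_neg hB hL.le hR0 (by linarith)))
    _ = δ := by rw [hL_def, one_div, log_inv, neg_neg, exp_log hδ0]
end
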